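/- Fix an integer n ≥ 2 and complex numbers q, p, κ with q ≠ 0, κ ≠ 0 and 0 < |p| < 1. Fix branches by q^z = exp(z·Log q) and p^z = exp(z·Log p), and define Γ_p(x) = (1 − p)^{1−x} · ∏_{k=0}^{∞} (1 − p^{k+1})/(1 − p^{x+k}) (the infinite product converges whenever p^{x+k} ≠ 1 for all k ≥ 0). For λ ∈ ℂⁿ write λ_{l,m} = λ_l − λ_m. Define the multiplicative 1-forms ξ_j(λ) = ∏_{i<j} q^{λ_i}, η_j(λ) = ∏_{i<j} Γ_p((λ_{i,j} + 1)/κ)⁻¹, ζ_j(λ) = ∏_{i<j} Γ_p(1 + λ_{j,i}/κ)⁻¹, and for m < l define σ_{l,m}(λ) = q · [Γ_p(1 + λ_{l,m}/κ + 1/κ)/Γ_p(1 + λ_{l,m}/κ)] · [Γ_p(−λ_{l,m}/κ)/Γ_p(−λ_{l,m}/κ + 1/κ)], with σ_{m,l}(λ) = σ_{l,m}(λ)⁻¹. Then the multiplicative 2-form (i, j) ↦ σ_{j,i} is exact with step 1: for all i ≠ j and all λ ∈ ℂⁿ at which all the quantities above are defined and nonzero, (d₁(ξηζ))_{i,j}(λ)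 = σ_{j,i}(λ), where ξηζ is the pointwise product 1-form, (d₁ψ)_{a,b} = (δ_a ψ_b)·(δ_b ψ_a)⁻¹, and (δ_s f)(λ) = f(λ)·f(λ − e_s)⁻¹. Consequently, for any γ ∈ ℂ with γ ≠ 0 and any fixed ρ ∈ ℂⁿ, the 2-form φ_{i,j}(λ) = σ_{j,i}(λ/γ − ρ) is γ-exact. -/

import Mathlib

/-- Points of the dynamical parameter space `ℂⁿ`. -/
abbrev Wt (n : ℕ) : Type := Fin n → ℂ

noncomputable section

/-- The `s`-th standard basis vector `e_s` of `ℂⁿ`. -/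
def eps (n : ℕ) (s : Fin n) : Wt n := Pi.single s 1

/-- The q-Gamma function with base `p`:
`Γ_p(x) = (1 − p)^{1−x} · ∏_{k=0}^{∞} (1 − p^{k+1})/(1 − p^{x+k})`,
complex powers being taken with the principal branch `a^z = exp(z·Log a)`. -/
def qGamma (p x : ℂ) : ℂ :=
  (1 - p) ^ (1 - x) * ∏' k : ℕ, (1 - p ^ ((k : ℂ) + 1)) / (1 - p ^ (x + (k : ℂ)))

/-- The multiplicative difference operator `(δ_s f)(λ) = f(λ)·f(λ − γe_s)⁻¹`
on `ℂ`-valued functions. -/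
def cdelta (n : ℕ) (γ : ℂ) (s : Fin n) (f : Wt n → ℂ) (lam : Wt n) : ℂ :=
  f lam * (f (lam - γ • eps n s))⁻¹

/-- The differential of a multiplicative 1-form with step `γ`:
`(d_γψ)_{a,b} = (δ_a ψ_b)·(δ_b ψ_a)⁻¹`. -/
def oneFormDiff (n : ℕ) (γ : ℂ) (ψ : Fin n → Wt n → ℂ) (a b : Fin n)
    (lam : Wt n) : ℂ :=
  cdelta n γ a (ψ b) lam * (cdelta n γ b (ψ a) lam)⁻¹

/-- The 1-form `ξ_j(λ) = ∏_{i<j} q^{λ_i}`. -/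
def xiForm (n : ℕ) (q : ℂ) (j : Fin n) (lam : Wt n) : ℂ :=
  ∏ i ∈ Finset.univ.filter (fun i : Fin n => i < j), q ^ lam i

/-- The 1-form `η_j(λ) = ∏_{i<j} Γ_p((λ_{i,j} + 1)/κ)⁻¹`. -/
def etaForm (n : ℕ) (p κ : ℂ) (j : Fin n) (lam : Wt n) : ℂ :=
  ∏ i ∈ Finset.univ.filter (fun i : Fin n => i < j),
    (qGamma p ((lam i - lam j + 1) / κ))⁻¹

/-- The 1-form `ζ_j(λ) = ∏_{i<j} Γ_p(1 + λ_{j,i}/κ)⁻¹`. -/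
def zetaForm (n : ℕ) (p κ : ℂ) (j : Fin n) (lam : Wt n) : ℂ :=
  ∏ i ∈ Finset.univ.filter (fun i : Fin n => i < j),
    (qGamma p (1 + (lam j - lam i) / κ))⁻¹

/-- For `m < l`, the gauge coefficient
`σ_{l,m}(λ) = q·[Γ_p(1+λ_{l,m}/κ+1/κ)/Γ_p(1+λ_{l,m}/κ)]·[Γ_p(−λ_{l,m}/κ)/Γ_p(−λ_{l,m}/κ+1/κ)]`. -/
def sigmaBase (n : ℕ) (q p κ : ℂ) (l m : Fin n) (lam : Wt n) : ℂ :=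
  q * (qGamma p (1 + (lam l - lam m) / κ + 1 / κ) /
        qGamma p (1 + (lam l - lam m) / κ)) *
    (qGamma p (-(lam l - lam m) / κ) / qGamma p (-(lam l - lam m) / κ + 1 / κ))

/-- The full family `σ_{l,m}`, with `σ_{m,l} = σ_{l,m}⁻¹` for `m < l`. -/
def sigmaForm (n : ℕ) (q p κ : ℂ) (l m : Fin n) (lam : Wt n) : ℂ :=
  if m < l then sigmaBase n q p κ l m lam else (sigmaBase n q p κ m l lam)⁻¹

/-- Regularity of the base point `lam` (relative to the directions `i`, `j`,
with step 1): every q-Gamma value occurring in the 1-forms `η`, `ζ` and in the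
coefficients `σ` at the points `lam`, `lam − e_i`, `lam − e_j` is defined and
nonzero. -/
def GoodPt (n : ℕ) (p κ : ℂ) (i j : Fin n) (lam : Wt n) : Prop :=
  ∀ a b : Fin n, ∀ μ : Wt n,
    (μ = lam ∨ μ = lam - eps n i ∨ μ = lam - eps n j) →
      qGamma p ((μ a - μ b + 1) / κ) ≠ 0 ∧
      qGamma p (1 + (μ a - μ b) / κ) ≠ 0 ∧
      qGamma p (-(μ a - μ b) / κ) ≠ 0 ∧
      qGamma p (-(μ a - μ b) / κ + 1 / κ) ≠ 0 ∧
      qGamma p (1 + (μ a - μ b) / κ + 1 / κ) ≠ 0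

/-!
Write `ψ = ξηζ`. Each `ψ_l` is a product over `i < l` of factors that depend only on the
coordinates `λ_i` and `λ_l`, so the shift `λ ↦ λ − e_m` changes `ψ_l` only through its `m`-th
factor, and only when `m < l`; that factor changes exactly by `σ_{l,m}`. Hence for `i < j`
the differential `(d₁ψ)_{i,j} = (δ_i ψ_j)(δ_j ψ_i)⁻¹` is `σ_{j,i} · 1`, and for `j < i` it is
`1 · σ_{i,j}⁻¹ = σ_{j,i}`. The `γ`-exact statement follows by the affine change of variables
`λ ↦ λ/γ − ρ`, which turns a shift by `γ e_s` into a shift by `e_s`.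
-/

open Finset

section Shift

variable {n : ℕ}

lemma sub_smul_eps_apply_self (γ : ℂ) (s : Fin n) (lam : Wt n) :
    (lam - γ • eps n s) s = lam s - γ := by
  simp [eps]

lemma sub_smul_eps_apply_of_ne (γ : ℂ) {s t : Fin n} (h : t ≠ s) (lam : Wt n) :
    (lam - γ • eps n s) t = lam t := by
  simp [eps, Pi.single_eq_of_ne h]

lemma inv_smul_sub_smul_sub {γ : ℂ} (hγ : γ ≠ 0) (lam v ρ : Wt n) :
    γ⁻¹ • (lam - γ • v) - ρ = (γ⁻¹ • lam - ρ) - (1 : ℂ) • v := by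
  rw [smul_sub, smul_smul, inv_mul_cancel₀ hγ]
  abel

end Shift

section Difference

variable {n : ℕ}

lemma cdelta_prod {ι : Type*} (γ : ℂ) (s : Fin n) (t : Finset ι) (f : ι → Wt n → ℂ)
    (lam : Wt n) :
    cdelta n γ s (fun μ => ∏ i ∈ t, f i μ) lam = ∏ i ∈ t, cdelta n γ s (f i) lam := by
  simp only [cdelta, ← prod_inv_distrib, ← prod_mul_distrib]

lemma cdelta_eq_one {γ : ℂ} {s : Fin n} {f : Wt n → ℂ} {lam : Wt n}
    (hf : f (lam - γ • eps n s) = f lam) (h0 : f lam ≠ 0) : cdelta n γ s f lam = 1 := by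
  rw [cdelta, hf, mul_inv_cancel₀ h0]

lemma oneFormDiff_comp_affine {γ : ℂ} (hγ : γ ≠ 0) (ρ : Wt n) (ψ : Fin n → Wt n → ℂ)
    (a b : Fin n) (lam : Wt n) :
    oneFormDiff n γ (fun c μ => ψ c (γ⁻¹ • μ - ρ)) a b lam
      = oneFormDiff n 1 ψ a b (γ⁻¹ • lam - ρ) := by
  simp only [oneFormDiff, cdelta, inv_smul_sub_smul_sub hγ]

end Difference

section Gauge

variable {n : ℕ} {q : ℂ} (p κ : ℂ)

def gaugeForm (n : ℕ) (q p κ : ℂ) (l : Fin n) (μ : Wt n) : ℂ :=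
  xiForm n q l μ * etaForm n p κ l μ * zetaForm n p κ l μ

def gaugeFactor (q p κ : ℂ) (l i : Fin n) (μ : Wt n) : ℂ :=
  q ^ μ i * (qGamma p ((μ i - μ l + 1) / κ))⁻¹ * (qGamma p (1 + (μ l - μ i) / κ))⁻¹

lemma gaugeForm_eq_prod (l : Fin n) :
    gaugeForm n q p κ l = fun μ => ∏ i ∈ univ.filter (· < l), gaugeFactor q p κ l i μ := by
  funext μ
  simp only [gaugeForm, xiForm, etaForm, zetaForm, ← prod_mul_distrib, gaugeFactor]

lemma gaugeFactor_ne_zero (hq : q ≠ 0) {l i : Fin n} {μ : Wt n}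
    (h₁ : qGamma p ((μ i - μ l + 1) / κ) ≠ 0) (h₂ : qGamma p (1 + (μ l - μ i) / κ) ≠ 0) :
    gaugeFactor q p κ l i μ ≠ 0 := by
  refine mul_ne_zero (mul_ne_zero ?_ (inv_ne_zero h₁)) (inv_ne_zero h₂)
  simp [Complex.cpow_eq_zero_iff, hq]

lemma cdelta_gaugeFactor_self (hq : q ≠ 0) {l m : Fin n} (hlm : l ≠ m) (lam : Wt n) :
    cdelta n 1 m (gaugeFactor q p κ l m) lam = sigmaBase n q p κ l m lam := by
  have hpow : q ^ (lam m - 1) = q ^ lam m / q := by rw [Complex.cpow_sub _ _ hq, Complex.cpow_one]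
  have hqm : q ^ lam m ≠ 0 := by simp [Complex.cpow_eq_zero_iff, hq]
  simp only [cdelta, gaugeFactor, sigmaBase, sub_smul_eps_apply_self,
    sub_smul_eps_apply_of_ne 1 hlm, hpow]
  rw [show (lam m - 1 - lam l + 1) / κ = -(lam l - lam m) / κ by ring,
    show (lam m - lam l + 1) / κ = -(lam l - lam m) / κ + 1 / κ by ring,
    show 1 + (lam l - (lam m - 1)) / κ = 1 + (lam l - lam m) / κ + 1 / κ by ring]
  field_simp

lemma cdelta_gaugeFactor_of_ne (hq : q ≠ 0) {l i m : Fin n} (hl : l ≠ m) (hi : i ≠ m)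
    {lam : Wt n} (h₁ : qGamma p ((lam i - lam l + 1) / κ) ≠ 0)
    (h₂ : qGamma p (1 + (lam l - lam i) / κ) ≠ 0) :
    cdelta n 1 m (gaugeFactor q p κ l i) lam = 1 :=
  cdelta_eq_one
    (by simp only [gaugeFactor, sub_smul_eps_apply_of_ne 1 hl, sub_smul_eps_apply_of_ne 1 hi])
    (gaugeFactor_ne_zero p κ hq h₁ h₂)

variable {p κ}

def GaugeRegular (n : ℕ) (p κ : ℂ) (lam : Wt n) : Prop :=
  ∀ a b : Fin n, qGamma p ((lam a - lam b + 1) / κ) ≠ 0 ∧ qGamma p (1 + (lam a - lam b) / κ) ≠ 0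

lemma GoodPt.gaugeRegular {i j : Fin n} {lam : Wt n} (h : GoodPt n p κ i j lam) :
    GaugeRegular n p κ lam :=
  fun a b => ⟨(h a b lam (.inl rfl)).1, (h a b lam (.inl rfl)).2.1⟩

lemma cdelta_gaugeForm_of_lt (hq : q ≠ 0) {m l : Fin n} (hml : m < l) {lam : Wt n}
    (hreg : GaugeRegular n p κ lam) :
    cdelta n 1 m (gaugeForm n q p κ l) lam = sigmaBase n q p κ l m lam := by
  rw [gaugeForm_eq_prod, cdelta_prod, prod_eq_single_of_mem m (by simpa using hml)]
  · exact cdelta_gaugeFactor_self p κ hq hml.ne' lam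
  · intro i _ him
    exact cdelta_gaugeFactor_of_ne p κ hq hml.ne' him (hreg i l).1 (hreg l i).2

lemma cdelta_gaugeForm_of_gt (hq : q ≠ 0) {m l : Fin n} (hlm : l < m) {lam : Wt n}
    (hreg : GaugeRegular n p κ lam) :
    cdelta n 1 m (gaugeForm n q p κ l) lam = 1 := by
  rw [gaugeForm_eq_prod, cdelta_prod]
  refine prod_eq_one fun i hi => ?_
  have hil : i < l := by simpa using hi
  exact cdelta_gaugeFactor_of_ne p κ hq hlm.ne (hil.trans hlm).ne (hreg i l).1 (hreg l i).2

theorem oneFormDiff_gaugeForm (hq : q ≠ 0) {i j : Fin n} (hij : i ≠ j) {lam : Wt n}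
    (hreg : GaugeRegular n p κ lam) :
    oneFormDiff n 1 (gaugeForm n q p κ) i j lam = sigmaForm n q p κ j i lam := by
  rw [oneFormDiff, sigmaForm]
  rcases hij.lt_or_gt with h | h
  · rw [cdelta_gaugeForm_of_lt hq h hreg, cdelta_gaugeForm_of_gt hq h hreg, inv_one, mul_one,
      if_pos h]
  · rw [cdelta_gaugeForm_of_gt hq h hreg, cdelta_gaugeForm_of_lt hq h hreg, one_mul,
      if_neg h.not_gt]

end Gauge

theorem sigma_two_form_exact_general (n : ℕ) (q p κ : ℂ)
    (hq : q ≠ 0) :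
    (∀ i j : Fin n, i ≠ j → ∀ lam : Wt n, GoodPt n p κ i j lam →
      oneFormDiff n 1
          (fun a mu => xiForm n q a mu * etaForm n p κ a mu * zetaForm n p κ a mu)
          i j lam
        = sigmaForm n q p κ j i lam) ∧
    (∀ γ : ℂ, γ ≠ 0 → ∀ ρ : Wt n, ∃ ψ : Fin n → Wt n → ℂ,
      ∀ i j : Fin n, i ≠ j → ∀ lam : Wt n,
        GoodPt n p κ i j (γ⁻¹ • lam - ρ) →
          oneFormDiff n γ ψ i j lam = sigmaForm n q p κ j i (γ⁻¹ • lam - ρ)) := by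
  have exact_one : ∀ i j : Fin n, i ≠ j → ∀ lam : Wt n, GoodPt n p κ i j lam →
      oneFormDiff n 1 (gaugeForm n q p κ) i j lam = sigmaForm n q p κ j i lam :=
    fun i j hij lam hG => oneFormDiff_gaugeForm hq hij hG.gaugeRegular
  refine ⟨exact_one, fun γ hγ ρ => ⟨fun a μ => gaugeForm n q p κ a (γ⁻¹ • μ - ρ), ?_⟩⟩
  intro i j hij lam hG
  rw [oneFormDiff_comp_affine hγ]
  exact exact_one i j hij _ hG

/-- Lemma 3 of the paper.  For `n ≥ 2`, `q ≠ 0`, `κ ≠ 0`,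
`0 < |p| < 1`, the multiplicative 2-form `(i, j) ↦ σ_{j,i}` is exact with
step 1: `(d₁(ξηζ))_{i,j}(λ) = σ_{j,i}(λ)` at every regular point `λ`.
Consequently, for any `γ ≠ 0` and any fixed `ρ ∈ ℂⁿ`, the 2-form
`φ_{i,j}(λ) = σ_{j,i}(λ/γ − ρ)` is `γ`-exact. -/
theorem sigma_two_form_exact (n : ℕ) (hn : 2 ≤ n) (q p κ : ℂ)
    (hq : q ≠ 0) (hκ : κ ≠ 0) (hp0 : 0 < ‖p‖) (hp1 : ‖p‖ < 1) :
    (∀ i j : Fin n, i ≠ j → ∀ lam : Wt n, GoodPt n p κ i j lam →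
      oneFormDiff n 1
          (fun a mu => xiForm n q a mu * etaForm n p κ a mu * zetaForm n p κ a mu)
          i j lam
        = sigmaForm n q p κ j i lam) ∧
    (∀ γ : ℂ, γ ≠ 0 → ∀ ρ : Wt n, ∃ ψ : Fin n → Wt n → ℂ,
      ∀ i j : Fin n, i ≠ j → ∀ lam : Wt n,
        GoodPt n p κ i j (γ⁻¹ • lam - ρ) →
          oneFormDiff n γ ψ i j lam = sigmaForm n q p κ j i (γ⁻¹ • lam - ρ)) :=
  sigma_two_form_exact_general n q p κ hq
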